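/- arXiv:1711.01106 — 3 statements merged into one kernel-verified Lean document; each statement's English description precedes it below -/
import Mathlib

section
/- Let K be an algebraically closed field, R = K[x_1,…,x_7], and let X be the (3×3)-matrix with rows (0, 0, x_1), (x_2, x_3, x_4), (x_5, x_6, x_7). Define q_1' = x_4²x_6²x_7 − 2x_3x_4x_6x_7² + x_3²x_7³ + x_1x_4x_6² − x_1x_3x_6x_7 − x_1x_3x_5 + x_1x_2x_6, q_2' = −x_3x_4x_6x_7 + x_3²x_7² − x_3x_4x_5 − x_1x_3x_6 + x_2x_4x_6, q_3' = −x_4²x_6x_7 − x_4x_6²x_7 + x_3x_4x_7² + x_3x_6x_7² − x_4²x_5 − x_1x_4x_6 − x_1x_6² + x_2x_4x_7 − x_3x_5x_7 + x_2x_6x_7 − x_1x_2, and q_4' = −x_4x_6x_7² + x_3x_7³ − x_4²x_6 + x_3x_4x_7 − x_4x_5x_7 − x_1x_6x_7 + x_2x_7² − x_1x_3 − x_1x_5 − x_3x_5 + x_2x_6. Then √(I_2(X)) = √((q_1', q_2', q_3', q_4')). -/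
/-!
By the Nullstellensatz it suffices to compare zero sets. At a point, write `a, …, g` for the
values of `x₁, …, x₇`, and `P = bf - ce`, `Q = bg - de`, `R = cg - df` for the minors of the last
two rows; the other nonzero minors are `±ab, ±ac, ±ae, ±af`. Each `qᵢ'` is a combination of
minors, e.g. `q₁' = gR² - afR + aP`, which gives one inclusion. Conversely, at a common zero of
the `qᵢ'`, if `a = 0` a short elimination gives `P = Q = R = 0`. If `a ≠ 0`, then `T = af - gR`
vanishes: otherwise cancelling `T` gives `ac = dR` and `aQ = R²`, which force `R = 0` and then
`f = 0`. Once `T = 0`, one finds in turn `P = Q = 0`, `b = 0`, `R = 0`, `f = 0` and `c = e = 0`.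
-/

/-- The ideal generated by the `t × t` minors of a matrix. -/
def minorsIdeal {R : Type*} [CommRing R] {m n : ℕ} (t : ℕ)
    (X : Matrix (Fin m) (Fin n) R) : Ideal R :=
  Ideal.span { d | ∃ (r : Fin t → Fin m) (c : Fin t → Fin n),
    Function.Injective r ∧ Function.Injective c ∧ d = (X.submatrix r c).det }

/-- The variables `x₁, …, x₇` of `K[x₁, …, x₇]`: `exX13 K i` is `x_{i+1}`. -/
noncomputable def exX13 (K : Type*) [Field K] (i : Fin 7) : MvPolynomial (Fin 7) K :=
  MvPolynomial.X i

/-- The `(3 × 3)`-matrix with rows `(0, 0, x₁)`, `(x₂, x₃, x₄)`, `(x₅, x₆, x₇)`. -/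
noncomputable def exampleMatrix13 (K : Type*) [Field K] :
    Matrix (Fin 3) (Fin 3) (MvPolynomial (Fin 7) K) :=
  !![0, 0, exX13 K 0;
     exX13 K 1, exX13 K 2, exX13 K 3;
     exX13 K 4, exX13 K 5, exX13 K 6]

open MvPolynomial

theorem MvPolynomial.radical_eq_radical_of_zeroLocus_eq {σ K : Type*} [Field K] [IsAlgClosed K]
    [Finite σ] {I J : Ideal (MvPolynomial σ K)} (h : zeroLocus K I = zeroLocus K J) :
    I.radical = J.radical := by
  rw [← vanishingIdeal_zeroLocus_eq_radical (K := K), h, vanishingIdeal_zeroLocus_eq_radical]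

theorem mem_zeroLocus_minorsIdeal_iff {σ k K : Type*} [Field k] [Field K] [Algebra k K]
    {m n : ℕ} (t : ℕ) (X : Matrix (Fin m) (Fin n) (MvPolynomial σ k)) (x : σ → K) :
    x ∈ zeroLocus K (minorsIdeal t X) ↔
      ∀ (r : Fin t → Fin m) (s : Fin t → Fin n), Function.Injective r → Function.Injective s →
        ((X.map (aeval x)).submatrix r s).det = 0 := by
  simp only [minorsIdeal, zeroLocus_span, Set.mem_ofPred_eq, forall_exists_index, and_imp]
  constructor
  · intro h r s hr hs
    simpa [AlgHom.map_det, Matrix.submatrix_map] using h _ r s hr hs rfl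
  · rintro h _ r s hr hs rfl
    simpa [AlgHom.map_det, Matrix.submatrix_map] using h r s hr hs

theorem Matrix.forall_det_submatrix_fin_two_eq_zero_iff {R m n : Type*} [CommRing R]
    (M : Matrix m n R) :
    (∀ (r : Fin 2 → m) (s : Fin 2 → n), Function.Injective r → Function.Injective s →
      (M.submatrix r s).det = 0) ↔ ∀ i i' j j', M i j * M i' j' = M i j' * M i' j := by
  constructor
  · intro h i i' j j'
    rcases eq_or_ne i i' with rfl | hi
    · ring
    rcases eq_or_ne j j' with rfl | hj
    · ring
    have := h ![i, i'] ![j, j']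
      (by simpa [Function.Injective, Fin.forall_fin_two] using ⟨hi, hi.symm⟩)
      (by simpa [Function.Injective, Fin.forall_fin_two] using ⟨hj, hj.symm⟩)
    rwa [Matrix.det_fin_two, sub_eq_zero] at this
  · intro h r s _ _
    rw [Matrix.det_fin_two, sub_eq_zero]
    exact h _ _ _ _

theorem map_exampleMatrix13 {K : Type*} [Field K] (x : Fin 7 → K) :
    (exampleMatrix13 K).map (aeval x) = !![0, 0, x 0; x 1, x 2, x 3; x 4, x 5, x 6] := by
  ext i j
  fin_cases i <;> fin_cases j <;> simp [exampleMatrix13, exX13]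

namespace Example13

theorem forall_mul_eq_mul_iff {R : Type*} [CommRing R] (a b c d e f g : R) :
    (∀ i i' j j', !![0, 0, a; b, c, d; e, f, g] i j * !![0, 0, a; b, c, d; e, f, g] i' j' =
      !![0, 0, a; b, c, d; e, f, g] i j' * !![0, 0, a; b, c, d; e, f, g] i' j) ↔
    a * b = 0 ∧ a * c = 0 ∧ a * e = 0 ∧ a * f = 0 ∧
      b * f - c * e = 0 ∧ b * g - d * e = 0 ∧ c * g - d * f = 0 := by
  constructor
  · intro h
    have hab := h 0 1 0 2
    have hac := h 0 1 1 2
    have hae := h 0 2 0 2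
    have haf := h 0 2 1 2
    have hP := h 1 2 0 1
    have hQ := h 1 2 0 2
    have hR := h 1 2 1 2
    simp only [Matrix.of_apply, Matrix.cons_val', Matrix.cons_val, Matrix.cons_val_zero,
      Matrix.cons_val_one, Matrix.cons_val_fin_one, Fin.isValue] at hab hac hae haf hP hQ hR
    exact ⟨by linear_combination -hab, by linear_combination -hac, by linear_combination -hae,
      by linear_combination -haf, by linear_combination hP, by linear_combination hQ,
      by linear_combination hR⟩
  · rintro ⟨hab, hac, hae, haf, hP, hQ, hR⟩ i i' j j'
    fin_cases i <;> fin_cases i' <;> fin_cases j <;> fin_cases j' <;>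
      simp only [Fin.zero_eta, Fin.mk_one, Fin.reduceFinMk, Matrix.of_apply, Matrix.cons_val',
        Matrix.cons_val, Matrix.cons_val_zero, Matrix.cons_val_one, Matrix.cons_val_fin_one,
        Fin.isValue] <;> grind

variable {K : Type*} [Field K] {a b c d e f g : K}

theorem minors_eq_zero_of_a_eq_zero
    (h1 : g * (c * g - d * f) ^ 2 = 0)
    (h2 : c * g * (c * g - d * f) + d * (b * f - c * e) = 0)
    (h3 : g * (d + f) * (c * g - d * f) + d * (b * g - d * e) + g * (b * f - c * e) = 0)
    (h4 : (g ^ 2 + d) * (c * g - d * f) + g * (b * g - d * e) + (b * f - c * e) = 0) :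
    b * f - c * e = 0 ∧ b * g - d * e = 0 ∧ c * g - d * f = 0 := by
  set P := b * f - c * e
  set Q := b * g - d * e
  set R := c * g - d * f
  by_cases hg : g = 0
  · subst hg
    have hde : (d * e) ^ 2 = 0 := by linear_combination -e * h3
    have hdf : (d * f) ^ 3 = 0 := by linear_combination f ^ 2 * h2 - d * f ^ 2 * h4
    simp only [pow_eq_zero_iff, ne_eq, OfNat.ofNat_ne_zero, not_false_eq_true] at hde hdf
    exact ⟨by linear_combination h4 + d * hdf, by linear_combination -hde,
      by linear_combination -hdf⟩
  · have hR : R = 0 := by simpa [hg] using h1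
    have hdQ : d * Q = 0 := by
      simpa [hg] using (by linear_combination d * h4 - h2 - (d * (g ^ 2 + d) - c * g) * hR :
        g * (d * Q) = 0)
    have hQ : Q = 0 := by
      simpa [hg] using (by linear_combination hdQ - h3 + g * h4 + g * (f - g ^ 2) * hR :
        g ^ 2 * Q = 0)
    exact ⟨by linear_combination h4 - g * hQ - (g ^ 2 + d) * hR, hQ, hR⟩

theorem a_mul_f_eq_of_a_ne_zero (ha : a ≠ 0)
    (h1 : g * (c * g - d * f) ^ 2 - a * f * (c * g - d * f) + a * (b * f - c * e) = 0)
    (h2 : c * g * (c * g - d * f) + d * (b * f - c * e) - a * c * f = 0)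
    (h3 : g * (d + f) * (c * g - d * f) + d * (b * g - d * e) + g * (b * f - c * e)
      - a * f * (d + f) - a * b = 0)
    (h4 : (g ^ 2 + d) * (c * g - d * f) + g * (b * g - d * e) + (b * f - c * e)
      - a * f * g - a * c - a * e = 0) :
    a * f = g * (c * g - d * f) := by
  set P := b * f - c * e
  set Q := b * g - d * e
  set R := c * g - d * f
  rw [← sub_eq_zero]
  set T := a * f - g * R
  by_contra hT
  have hPa : a * P = R * T := by linear_combination h1
  have hPd : d * P = c * T := by linear_combination h2
  have hS3 : (d + f) * (Q - T) = e * R + a * b := by linear_combination h3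
  have hS4 : P + g * (Q - T) + d * R = a * (c + e) := by linear_combination h4
  have hac : a * c = d * R := mul_left_cancel₀ hT (by linear_combination d * hPa - a * hPd)
  have hQ : a * Q = R ^ 2 :=
    mul_left_cancel₀ hT (by linear_combination (R + a * g) * hPa - a * R * hS4 - a * R * hac)
  have hRb : R * (a * b) = R * (d * (Q - T)) := by linear_combination Q * hac - d * hPa
  have hRf : R * (f * (Q - T)) = e * R ^ 2 := by linear_combination R * hS3 + hRb
  have hR : R = 0 := by
    have : a * R * T ^ 2 = 0 := by
      linear_combination T * R * hQ - R ^ 2 * hPa + a * R ^ 2 * hS4 + a * R ^ 2 * hac - a ^ 2 * hRf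
    simpa [ha, hT] using this
  have hc : c = 0 := by simpa [ha, hR] using hac
  have hP : P = 0 := by simpa [ha, hR] using hPa
  have hQ0 : Q = 0 := by simpa [ha, hR] using hQ
  have hf : a * f ^ 3 = 0 := by
    linear_combination -f * hS3 + f * (d + f) * hQ0 + (T - e * f + f ^ 2 * g) * hR
      - (g * T + a * e) * hc - a * hP
  exact hT (by linear_combination a * (by simpa [ha] using hf : f = 0) - g * hR)

theorem eq_zero_of_a_mul_f_eq (ha : a ≠ 0) (haf : a * f = g * (c * g - d * f))
    (h1 : g * (c * g - d * f) ^ 2 - a * f * (c * g - d * f) + a * (b * f - c * e) = 0)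
    (h3 : g * (d + f) * (c * g - d * f) + d * (b * g - d * e) + g * (b * f - c * e)
      - a * f * (d + f) - a * b = 0)
    (h4 : (g ^ 2 + d) * (c * g - d * f) + g * (b * g - d * e) + (b * f - c * e)
      - a * f * g - a * c - a * e = 0) :
    b = 0 ∧ c = 0 ∧ e = 0 ∧ f = 0 := by
  set P := b * f - c * e
  set Q := b * g - d * e
  set R := c * g - d * f
  have hP : P = 0 := by simpa [ha] using (by linear_combination h1 + R * haf : a * P = 0)
  have hdQ : d * Q = a * b := by linear_combination h3 + (d + f) * haf - g * hP
  have hgQ : g * Q + d * R = a * (c + e) := by linear_combination h4 + g * haf - hP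
  set W := g * Q - a * e
  have hRW : a * R = g * W := by linear_combination -g * hgQ - d * haf
  have hQW : a * Q = d * W := by linear_combination -g * hdQ
  have hQW0 : Q * W = 0 := by linear_combination Q * hgQ - R * hdQ + a * d * hP
  have hQ : Q = 0 := by
    simpa [ha] using (by linear_combination Q * hQW + d * hQW0 : a * Q ^ 2 = 0)
  have hb : b = 0 := by simpa [ha] using (by linear_combination -hdQ + d * hQ : a * b = 0)
  have hR : R = 0 := by
    simpa [ha] using (by linear_combination R * hRW + (g ^ 2 * R - a * g * f) * hQ
      + a * g ^ 2 * hP : a * R ^ 2 = 0)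
  have hf : f = 0 := by simpa [ha] using (by linear_combination haf + g * hR : a * f = 0)
  have hce : c + e = 0 := by
    simpa [ha] using (by linear_combination -hgQ + g * hQ + d * hR : a * (c + e) = 0)
  have he : e = 0 := by simpa using (by linear_combination e * hce + hP - f * hb : e ^ 2 = 0)
  exact ⟨hb, by linear_combination hce - he, he, hf⟩

theorem minors_eq_zero_of_q_eq_zero
    (h1 : g * (c * g - d * f) ^ 2 - a * f * (c * g - d * f) + a * (b * f - c * e) = 0)
    (h2 : c * g * (c * g - d * f) + d * (b * f - c * e) - a * c * f = 0)
    (h3 : g * (d + f) * (c * g - d * f) + d * (b * g - d * e) + g * (b * f - c * e)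
      - a * f * (d + f) - a * b = 0)
    (h4 : (g ^ 2 + d) * (c * g - d * f) + g * (b * g - d * e) + (b * f - c * e)
      - a * f * g - a * c - a * e = 0) :
    a * b = 0 ∧ a * c = 0 ∧ a * e = 0 ∧ a * f = 0 ∧
      b * f - c * e = 0 ∧ b * g - d * e = 0 ∧ c * g - d * f = 0 := by
  rcases eq_or_ne a 0 with rfl | ha
  · simp only [zero_mul, sub_zero, add_zero] at h1 h2 h3 h4
    simpa using minors_eq_zero_of_a_eq_zero h1 h2 h3 h4
  · obtain ⟨rfl, rfl, rfl, rfl⟩ :=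
      eq_zero_of_a_mul_f_eq ha (a_mul_f_eq_of_a_ne_zero ha h1 h2 h3 h4) h1 h3 h4
    simp

theorem q_eq_zero_iff :
    (g * (c * g - d * f) ^ 2 - a * f * (c * g - d * f) + a * (b * f - c * e) = 0 ∧
      c * g * (c * g - d * f) + d * (b * f - c * e) - a * c * f = 0 ∧
      g * (d + f) * (c * g - d * f) + d * (b * g - d * e) + g * (b * f - c * e)
        - a * f * (d + f) - a * b = 0 ∧
      (g ^ 2 + d) * (c * g - d * f) + g * (b * g - d * e) + (b * f - c * e)
        - a * f * g - a * c - a * e = 0) ↔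
    a * b = 0 ∧ a * c = 0 ∧ a * e = 0 ∧ a * f = 0 ∧
      b * f - c * e = 0 ∧ b * g - d * e = 0 ∧ c * g - d * f = 0 := by
  constructor
  · rintro ⟨h1, h2, h3, h4⟩
    exact minors_eq_zero_of_q_eq_zero h1 h2 h3 h4
  · rintro ⟨hab, hac, hae, haf, hP, hQ, hR⟩
    exact ⟨by linear_combination g * (c * g - d * f) * hR - (c * g - d * f) * haf + a * hP,
      by linear_combination c * g * hR + d * hP - f * hac,
      by linear_combination g * (d + f) * hR + d * hQ + g * hP - (d + f) * haf - hab,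
      by linear_combination (g ^ 2 + d) * hR + g * hQ + hP - g * haf - hac - hae⟩

end Example13

/-- `√(I₂(X)) = √((q₁', q₂', q₃', q₄'))` for the explicit polynomials `qᵢ'` of the
example, where `x_j = exX13 K (j-1)`. -/
theorem stmt13 {K : Type*} [Field K] [IsAlgClosed K] :
    (minorsIdeal 2 (exampleMatrix13 K)).radical =
      (Ideal.span {
        -- q₁' = x₄²x₆²x₇ − 2x₃x₄x₆x₇² + x₃²x₇³ + x₁x₄x₆² − x₁x₃x₆x₇ − x₁x₃x₅ + x₁x₂x₆
        (exX13 K 3) ^ 2 * (exX13 K 5) ^ 2 * (exX13 K 6)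
          - 2 * (exX13 K 2) * (exX13 K 3) * (exX13 K 5) * (exX13 K 6) ^ 2
          + (exX13 K 2) ^ 2 * (exX13 K 6) ^ 3
          + (exX13 K 0) * (exX13 K 3) * (exX13 K 5) ^ 2
          - (exX13 K 0) * (exX13 K 2) * (exX13 K 5) * (exX13 K 6)
          - (exX13 K 0) * (exX13 K 2) * (exX13 K 4)
          + (exX13 K 0) * (exX13 K 1) * (exX13 K 5),
        -- q₂' = −x₃x₄x₆x₇ + x₃²x₇² − x₃x₄x₅ − x₁x₃x₆ + x₂x₄x₆
        - (exX13 K 2) * (exX13 K 3) * (exX13 K 5) * (exX13 K 6)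
          + (exX13 K 2) ^ 2 * (exX13 K 6) ^ 2
          - (exX13 K 2) * (exX13 K 3) * (exX13 K 4)
          - (exX13 K 0) * (exX13 K 2) * (exX13 K 5)
          + (exX13 K 1) * (exX13 K 3) * (exX13 K 5),
        -- q₃' = −x₄²x₆x₇ − x₄x₆²x₇ + x₃x₄x₇² + x₃x₆x₇² − x₄²x₅ − x₁x₄x₆ − x₁x₆²
        --        + x₂x₄x₇ − x₃x₅x₇ + x₂x₆x₇ − x₁x₂
        - (exX13 K 3) ^ 2 * (exX13 K 5) * (exX13 K 6)
          - (exX13 K 3) * (exX13 K 5) ^ 2 * (exX13 K 6)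
          + (exX13 K 2) * (exX13 K 3) * (exX13 K 6) ^ 2
          + (exX13 K 2) * (exX13 K 5) * (exX13 K 6) ^ 2
          - (exX13 K 3) ^ 2 * (exX13 K 4)
          - (exX13 K 0) * (exX13 K 3) * (exX13 K 5)
          - (exX13 K 0) * (exX13 K 5) ^ 2
          + (exX13 K 1) * (exX13 K 3) * (exX13 K 6)
          - (exX13 K 2) * (exX13 K 4) * (exX13 K 6)
          + (exX13 K 1) * (exX13 K 5) * (exX13 K 6)
          - (exX13 K 0) * (exX13 K 1),
        -- q₄' = −x₄x₆x₇² + x₃x₇³ − x₄²x₆ + x₃x₄x₇ − x₄x₅x₇ − x₁x₆x₇ + x₂x₇²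
        --        − x₁x₃ − x₁x₅ − x₃x₅ + x₂x₆
        - (exX13 K 3) * (exX13 K 5) * (exX13 K 6) ^ 2
          + (exX13 K 2) * (exX13 K 6) ^ 3
          - (exX13 K 3) ^ 2 * (exX13 K 5)
          + (exX13 K 2) * (exX13 K 3) * (exX13 K 6)
          - (exX13 K 3) * (exX13 K 4) * (exX13 K 6)
          - (exX13 K 0) * (exX13 K 5) * (exX13 K 6)
          + (exX13 K 1) * (exX13 K 6) ^ 2
          - (exX13 K 0) * (exX13 K 2)
          - (exX13 K 0) * (exX13 K 4)
          - (exX13 K 2) * (exX13 K 4)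
          + (exX13 K 1) * (exX13 K 5)} : Ideal (MvPolynomial (Fin 7) K)).radical := by
  refine MvPolynomial.radical_eq_radical_of_zeroLocus_eq (Set.ext fun x => ?_)
  rw [mem_zeroLocus_minorsIdeal_iff, Matrix.forall_det_submatrix_fin_two_eq_zero_iff,
    map_exampleMatrix13, Example13.forall_mul_eq_mul_iff, zeroLocus_span]
  simp only [Set.mem_ofPred_eq, Set.mem_insert_iff, Set.mem_singleton_iff, forall_eq_or_imp,
    forall_eq, exX13, map_sub, map_add, map_mul, map_pow, map_neg, map_ofNat, aeval_X]
  rw [← Example13.q_eq_zero_iff]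
  refine and_congr ?_ (and_congr ?_ (and_congr ?_ ?_)) <;> ring_nf
end

section
/- Let K be an algebraically closed field, R = K[x_1,…,x_6], and let X be the (2×4)-matrix with rows (0, x_1, x_2, x_3) and (x_4, 0, x_5, x_6). Define q_1' = x_1x_2x_6² − x_1x_3x_5x_6 − x_2²x_3x_6² + 2x_2x_3²x_5x_6 − x_3³x_5² − x_1x_4, q_2' = x_1x_5x_6 − x_2x_3x_5x_6 + x_3²x_5² − x_2x_4, and q_3' = x_1x_6² − x_2x_3x_6² + x_3²x_5x_6 − x_3x_4 + x_1x_5 − x_2²x_6 + x_2x_3x_5. Then √(I_2(X)) = √((q_1', q_2', q_3')). -/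
/-- The variables `x₁, …, x₆` of `K[x₁, …, x₆]`: `exX14 K i` is `x_{i+1}`. -/
noncomputable def exX14 (K : Type*) [Field K] (i : Fin 6) : MvPolynomial (Fin 6) K :=
  MvPolynomial.X i

/-- The `(2 × 4)`-matrix with rows `(0, x₁, x₂, x₃)` and `(x₄, 0, x₅, x₆)`. -/
noncomputable def exampleMatrix14 (K : Type*) [Field K] :
    Matrix (Fin 2) (Fin 4) (MvPolynomial (Fin 6) K) :=
  !![0, exX14 K 0, exX14 K 1, exX14 K 2;
     exX14 K 3, 0, exX14 K 4, exX14 K 5]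

section
variable {R : Type*} [CommRing R]

theorem Ideal.radical_le_radical_of_forall_isPrime {I J : Ideal R}
    (h : ∀ P : Ideal R, P.IsPrime → J ≤ P → I ≤ P) : I.radical ≤ J.radical := by
  rw [Ideal.radical_le_radical_iff, Ideal.radical_eq_sInf]
  exact le_sInf fun P ⟨hJP, hP⟩ => h P hP hJP

theorem minorsIdeal_two_le_iff {n : ℕ} (X : Matrix (Fin 2) (Fin n) R) (I : Ideal R) :
    minorsIdeal 2 X ≤ I ↔ ∀ j k, X 0 j * X 1 k - X 0 k * X 1 j ∈ I := by
  constructor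
  · intro h j k
    obtain rfl | hjk := eq_or_ne j k
    · simp
    refine h (Ideal.subset_span
      ⟨![0, 1], ![j, k], by decide, ?_, by rw [Matrix.det_fin_two]; simp⟩)
    intro a b hab
    fin_cases a <;> fin_cases b <;> simp_all [eq_comm]
  · refine fun h => Ideal.span_le.2 ?_
    rintro _ ⟨r, c, hr, -, rfl⟩
    have hr01 : r 0 ≠ r 1 := hr.ne (by decide)
    rw [SetLike.mem_coe, Matrix.det_fin_two, Matrix.submatrix_apply, Matrix.submatrix_apply,
      Matrix.submatrix_apply, Matrix.submatrix_apply]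
    obtain ⟨h0, h1⟩ | ⟨h0, h1⟩ : r 0 = 0 ∧ r 1 = 1 ∨ r 0 = 1 ∧ r 1 = 0 := by omega
    · rw [h0, h1]
      exact h (c 0) (c 1)
    · rw [h0, h1]
      convert I.neg_mem (h (c 0) (c 1)) using 1
      ring

-- The paper's `qᵢ'`, with `x_{j+1}` written `x j`.
def q₁' (x : Fin 6 → R) : R :=
  x 0 * x 1 * x 5 ^ 2 - x 0 * x 2 * x 4 * x 5 - x 1 ^ 2 * x 2 * x 5 ^ 2
    + 2 * x 1 * x 2 ^ 2 * x 4 * x 5 - x 2 ^ 3 * x 4 ^ 2 - x 0 * x 3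

def q₂' (x : Fin 6 → R) : R :=
  x 0 * x 4 * x 5 - x 1 * x 2 * x 4 * x 5 + x 2 ^ 2 * x 4 ^ 2 - x 1 * x 3

def q₃' (x : Fin 6 → R) : R :=
  x 0 * x 5 ^ 2 - x 1 * x 2 * x 5 ^ 2 + x 2 ^ 2 * x 4 * x 5 - x 2 * x 3 + x 0 * x 4
    - x 1 ^ 2 * x 5 + x 1 * x 2 * x 4

theorem span_q_le_of_minors_mem (I : Ideal R) (x : Fin 6 → R)
    (h03 : x 0 * x 3 ∈ I) (h13 : x 1 * x 3 ∈ I) (h23 : x 2 * x 3 ∈ I) (h04 : x 0 * x 4 ∈ I)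
    (h05 : x 0 * x 5 ∈ I) (hf : x 1 * x 5 - x 2 * x 4 ∈ I) :
    Ideal.span {q₁' x, q₂' x, q₃' x} ≤ I := by
  simp only [Ideal.span_le, Set.insert_subset_iff, Set.singleton_subset_iff, SetLike.mem_coe]
  refine ⟨?_, ?_, ?_⟩
  · rw [show q₁' x = (x 0 * x 5 - x 1 * x 2 * x 5 + x 2 ^ 2 * x 4) * (x 1 * x 5 - x 2 * x 4)
        - x 0 * x 3 by unfold q₁'; ring]
    exact sub_mem (I.mul_mem_left _ hf) h03
  · rw [show q₂' x = x 4 * (x 0 * x 5) - x 2 * x 4 * (x 1 * x 5 - x 2 * x 4) - x 1 * x 3 by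
      unfold q₂'; ring]
    exact sub_mem (sub_mem (I.mul_mem_left _ h05) (I.mul_mem_left _ hf)) h13
  · rw [show q₃' x = x 5 * (x 0 * x 5) - (x 2 * x 5 + x 1) * (x 1 * x 5 - x 2 * x 4) - x 2 * x 3
        + x 0 * x 4 by unfold q₃'; ring]
    exact add_mem (sub_mem (sub_mem (I.mul_mem_left _ h05) (I.mul_mem_left _ hf)) h23) h04

end

section
variable {R : Type*} [CommRing R] [NoZeroDivisors R]

theorem minors_eq_zero_of_q_eq_zero_of_x3_eq_zero (x : Fin 6 → R) (h1 : q₁' x = 0)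
    (h2 : q₂' x = 0) (h3 : q₃' x = 0) (hx3 : x 3 = 0) :
    x 0 * x 3 = 0 ∧ x 1 * x 3 = 0 ∧ x 2 * x 3 = 0 ∧ x 0 * x 4 = 0 ∧ x 0 * x 5 = 0 ∧
      x 1 * x 5 - x 2 * x 4 = 0 := by
  unfold q₁' q₂' q₃' at *
  set f := x 1 * x 5 - x 2 * x 4
  set g := x 0 * x 5 - x 1 * x 2 * x 5 + x 2 ^ 2 * x 4
  have hfg : f * g = 0 := by linear_combination h1 + x 0 * hx3
  have h4g : x 4 * g = 0 := by linear_combination h2 + x 1 * hx3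
  have h5g : x 5 * g + x 0 * x 4 - x 1 * f = 0 := by linear_combination h3 + x 2 * hx3
  have hg : g = 0 := by
    by_contra hg
    have hf : f = 0 := (mul_eq_zero.mp hfg).resolve_right hg
    have hx4 : x 4 = 0 := (mul_eq_zero.mp h4g).resolve_right hg
    have hx5 : x 5 = 0 := (mul_eq_zero.mp (by linear_combination h5g + x 1 * hf - x 0 * hx4 :
      x 5 * g = 0)).resolve_right hg
    exact hg (by linear_combination (x 0 - x 1 * x 2) * hx5 + x 2 ^ 2 * hx4)
  have hf : f = 0 := pow_eq_zero_iff two_ne_zero |>.mp <| by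
    linear_combination (x 4 + x 5 ^ 2) * hg - x 5 * h5g
  refine ⟨by rw [hx3, mul_zero], by rw [hx3, mul_zero], by rw [hx3, mul_zero], ?_, ?_, hf⟩
  · linear_combination h5g - x 5 * hg + x 1 * hf
  · linear_combination hg + x 2 * hf

theorem minors_eq_zero_of_q_eq_zero_of_x3_ne_zero (x : Fin 6 → R) (h1 : q₁' x = 0)
    (h2 : q₂' x = 0) (h3 : q₃' x = 0) (hx3 : x 3 ≠ 0) :
    x 0 * x 3 = 0 ∧ x 1 * x 3 = 0 ∧ x 2 * x 3 = 0 ∧ x 0 * x 4 = 0 ∧ x 0 * x 5 = 0 ∧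
      x 1 * x 5 - x 2 * x 4 = 0 := by
  unfold q₁' q₂' q₃' at *
  set f := x 1 * x 5 - x 2 * x 4
  have hx1f : x 1 * f - x 0 * x 4 = 0 := (mul_eq_zero.mp (by
    linear_combination x 4 * h1 - f * h2 : x 3 * (x 1 * f - x 0 * x 4) = 0)).resolve_left hx3
  have hf : f = 0 := (mul_eq_zero.mp (by
    linear_combination x 4 * h3 - x 5 * h2 + x 4 * hx1f : x 3 * f = 0)).resolve_left hx3
  have hx0 : x 0 = 0 := (mul_eq_zero.mp (by
    linear_combination (x 0 * x 5 - x 1 * x 2 * x 5 + x 2 ^ 2 * x 4) * hf - h1 :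
      x 0 * x 3 = 0)).resolve_right hx3
  have hx1 : x 1 = 0 := (mul_eq_zero.mp (by
    linear_combination x 4 * x 5 * hx0 - x 2 * x 4 * hf - h2 : x 1 * x 3 = 0)).resolve_right hx3
  have hx2 : x 2 = 0 := (mul_eq_zero.mp (by
    linear_combination (x 5 ^ 2 + x 4) * hx0 - (x 2 * x 5 + x 1) * hf - h3 :
      x 2 * x 3 = 0)).resolve_right hx3
  simp only [hx0, hx1, hx2, zero_mul, and_self, hf]

theorem minors_eq_zero_of_q_eq_zero (x : Fin 6 → R) (h1 : q₁' x = 0) (h2 : q₂' x = 0)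
    (h3 : q₃' x = 0) :
    x 0 * x 3 = 0 ∧ x 1 * x 3 = 0 ∧ x 2 * x 3 = 0 ∧ x 0 * x 4 = 0 ∧ x 0 * x 5 = 0 ∧
      x 1 * x 5 - x 2 * x 4 = 0 := by
  by_cases hx3 : x 3 = 0
  · exact minors_eq_zero_of_q_eq_zero_of_x3_eq_zero x h1 h2 h3 hx3
  · exact minors_eq_zero_of_q_eq_zero_of_x3_ne_zero x h1 h2 h3 hx3

end

theorem minors_mem_of_span_q_le {R : Type*} [CommRing R] (P : Ideal R) [P.IsPrime]
    (x : Fin 6 → R) (h : Ideal.span {q₁' x, q₂' x, q₃' x} ≤ P) :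
    x 0 * x 3 ∈ P ∧ x 1 * x 3 ∈ P ∧ x 2 * x 3 ∈ P ∧ x 0 * x 4 ∈ P ∧ x 0 * x 5 ∈ P ∧
      x 1 * x 5 - x 2 * x 4 ∈ P := by
  simp only [Ideal.span_le, Set.insert_subset_iff, Set.singleton_subset_iff, SetLike.mem_coe,
    ← Ideal.Quotient.eq_zero_iff_mem, q₁', q₂', q₃', map_add, map_sub, map_mul, map_pow,
    map_ofNat] at h ⊢
  obtain ⟨h1, h2, h3⟩ := h
  exact minors_eq_zero_of_q_eq_zero (fun i => Ideal.Quotient.mk P (x i)) h1 h2 h3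

theorem minorsIdeal_exampleMatrix14_le_iff {K : Type*} [Field K]
    (I : Ideal (MvPolynomial (Fin 6) K)) :
    minorsIdeal 2 (exampleMatrix14 K) ≤ I ↔
      exX14 K 0 * exX14 K 3 ∈ I ∧ exX14 K 1 * exX14 K 3 ∈ I ∧ exX14 K 2 * exX14 K 3 ∈ I ∧
      exX14 K 0 * exX14 K 4 ∈ I ∧ exX14 K 0 * exX14 K 5 ∈ I ∧
      exX14 K 1 * exX14 K 5 - exX14 K 2 * exX14 K 4 ∈ I := by
  rw [minorsIdeal_two_le_iff]
  simp only [exampleMatrix14, Fin.isValue, Matrix.of_apply, Matrix.cons_val',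
    Matrix.cons_val_fin_one, Matrix.cons_val_zero, Matrix.cons_val_one, Matrix.cons_val_succ,
    Fin.forall_fin_succ, zero_mul, mul_zero, sub_zero, zero_sub, sub_self, neg_mem_iff,
    forall_const, zero_mem, true_and, and_true]
  exact ⟨fun ⟨⟨h1, h2, h3⟩, ⟨_, h4, h5⟩, ⟨_, _, h6⟩, _⟩ => ⟨h1, h2, h3, h4, h5, h6⟩,
    fun ⟨h1, h2, h3, h4, h5, h6⟩ =>
      ⟨⟨h1, h2, h3⟩, ⟨h1, h4, h5⟩, ⟨h2, h4, h6⟩, h3, h5, sub_mem_comm_iff.1 h6⟩⟩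

theorem stmt14_general {K : Type*} [Field K] :
    (minorsIdeal 2 (exampleMatrix14 K)).radical =
      (Ideal.span {
        -- q₁' = x₁x₂x₆² − x₁x₃x₅x₆ − x₂²x₃x₆² + 2x₂x₃²x₅x₆ − x₃³x₅² − x₁x₄
        (exX14 K 0) * (exX14 K 1) * (exX14 K 5) ^ 2
          - (exX14 K 0) * (exX14 K 2) * (exX14 K 4) * (exX14 K 5)
          - (exX14 K 1) ^ 2 * (exX14 K 2) * (exX14 K 5) ^ 2
          + 2 * (exX14 K 1) * (exX14 K 2) ^ 2 * (exX14 K 4) * (exX14 K 5)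
          - (exX14 K 2) ^ 3 * (exX14 K 4) ^ 2
          - (exX14 K 0) * (exX14 K 3),
        -- q₂' = x₁x₅x₆ − x₂x₃x₅x₆ + x₃²x₅² − x₂x₄
        (exX14 K 0) * (exX14 K 4) * (exX14 K 5)
          - (exX14 K 1) * (exX14 K 2) * (exX14 K 4) * (exX14 K 5)
          + (exX14 K 2) ^ 2 * (exX14 K 4) ^ 2
          - (exX14 K 1) * (exX14 K 3),
        -- q₃' = x₁x₆² − x₂x₃x₆² + x₃²x₅x₆ − x₃x₄ + x₁x₅ − x₂²x₆ + x₂x₃x₅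
        (exX14 K 0) * (exX14 K 5) ^ 2
          - (exX14 K 1) * (exX14 K 2) * (exX14 K 5) ^ 2
          + (exX14 K 2) ^ 2 * (exX14 K 4) * (exX14 K 5)
          - (exX14 K 2) * (exX14 K 3)
          + (exX14 K 0) * (exX14 K 4)
          - (exX14 K 1) ^ 2 * (exX14 K 5)
          + (exX14 K 1) * (exX14 K 2) * (exX14 K 4)} :
        Ideal (MvPolynomial (Fin 6) K)).radical := by
  change _ = (Ideal.span {q₁' (exX14 K), q₂' (exX14 K), q₃' (exX14 K)}).radical
  refine le_antisymm (Ideal.radical_le_radical_of_forall_isPrime fun P _ hP => ?_)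
    (Ideal.radical_mono ?_)
  · exact (minorsIdeal_exampleMatrix14_le_iff P).2 (minors_mem_of_span_q_le P _ hP)
  · obtain ⟨h03, h13, h23, h04, h05, hf⟩ :=
      (minorsIdeal_exampleMatrix14_le_iff (minorsIdeal 2 (exampleMatrix14 K))).1 le_rfl
    exact span_q_le_of_minors_mem _ _ h03 h13 h23 h04 h05 hf

/-- `√(I₂(X)) = √((q₁', q₂', q₃'))` for the explicit polynomials `qᵢ'` of the example,
where `x_j = exX14 K (j-1)`. -/
theorem stmt14 {K : Type*} [Field K] [IsAlgClosed K] :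
    (minorsIdeal 2 (exampleMatrix14 K)).radical =
      (Ideal.span {
        -- q₁' = x₁x₂x₆² − x₁x₃x₅x₆ − x₂²x₃x₆² + 2x₂x₃²x₅x₆ − x₃³x₅² − x₁x₄
        (exX14 K 0) * (exX14 K 1) * (exX14 K 5) ^ 2
          - (exX14 K 0) * (exX14 K 2) * (exX14 K 4) * (exX14 K 5)
          - (exX14 K 1) ^ 2 * (exX14 K 2) * (exX14 K 5) ^ 2
          + 2 * (exX14 K 1) * (exX14 K 2) ^ 2 * (exX14 K 4) * (exX14 K 5)
          - (exX14 K 2) ^ 3 * (exX14 K 4) ^ 2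
          - (exX14 K 0) * (exX14 K 3),
        -- q₂' = x₁x₅x₆ − x₂x₃x₅x₆ + x₃²x₅² − x₂x₄
        (exX14 K 0) * (exX14 K 4) * (exX14 K 5)
          - (exX14 K 1) * (exX14 K 2) * (exX14 K 4) * (exX14 K 5)
          + (exX14 K 2) ^ 2 * (exX14 K 4) ^ 2
          - (exX14 K 1) * (exX14 K 3),
        -- q₃' = x₁x₆² − x₂x₃x₆² + x₃²x₅x₆ − x₃x₄ + x₁x₅ − x₂²x₆ + x₂x₃x₅
        (exX14 K 0) * (exX14 K 5) ^ 2
          - (exX14 K 1) * (exX14 K 2) * (exX14 K 5) ^ 2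
          + (exX14 K 2) ^ 2 * (exX14 K 4) * (exX14 K 5)
          - (exX14 K 2) * (exX14 K 3)
          + (exX14 K 0) * (exX14 K 4)
          - (exX14 K 1) ^ 2 * (exX14 K 5)
          + (exX14 K 1) * (exX14 K 2) * (exX14 K 4)} :
        Ideal (MvPolynomial (Fin 6) K)).radical :=
  stmt14_general
end

section
/- Let K be a field, let t be a positive integer, and let Y be a ((t+1)×(t+1))-matrix with entries in K such that every t×t minor of Y whose set of rows contains the first row of Y vanishes. If the first row of Y is nonzero, then the remaining t rows of Y are linearly dependent over K. -/
/-!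
Suppose the rows `Y 1, …, Y t` are independent and fix `k ≥ 1`. Every `t × t` minor avoiding
row `k` contains row `0`, so Laplace expansion along row `k` shows that `det Y` stays zero whatever
vector replaces row `k`. Hence the rows other than row `k` are dependent, i.e. `Y 0` lies in the
span of the rows `Y i` with `i ≠ 0, k`. By independence, the only vector lying in all of these
spans is `0`.
-/

open Submodule

theorem LinearIndependent.eq_zero_of_forall_mem_span_image_compl {ι R M : Type*} [Semiring R]
    [AddCommMonoid M] [Module R M] [Nonempty ι] {v : ι → M} (hv : LinearIndependent R v) {x : M}
    (hx : ∀ i, x ∈ span R (v '' {i}ᶜ)) : x = 0 := by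
  choose l hl hlx using fun i => (Finsupp.mem_span_image_iff_linearCombination R).1 (hx i)
  obtain ⟨i₀⟩ := ‹Nonempty ι›
  have hl_eq : ∀ i, l i = l i₀ := fun i => hv ((hlx i).trans (hlx i₀).symm)
  have hl_zero : l i₀ = 0 := Finsupp.ext fun i => by
    rw [← hl_eq i]
    exact Finsupp.notMem_support_iff.1 fun hi => hl i hi rfl
  rw [← hlx i₀, hl_zero, map_zero]

namespace Matrix

variable {n : ℕ}

theorem det_updateRow_eq_zero_of_det_submatrix_eq_zero {R : Type*} [CommRing R]
    (A : Matrix (Fin (n + 1)) (Fin (n + 1)) R) {j : Fin (n + 1)}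
    (h : ∀ c : Fin (n + 1), (A.submatrix j.succAbove c.succAbove).det = 0)
    (u : Fin (n + 1) → R) : (A.updateRow j u).det = 0 := by
  rw [det_succ_row _ j]
  refine Finset.sum_eq_zero fun c _ => ?_
  have : (A.updateRow j u).submatrix j.succAbove c.succAbove =
      A.submatrix j.succAbove c.succAbove := by
    ext a b
    simp [j.succAbove_ne a]
  rw [this, h, mul_zero]

theorem exists_det_updateRow_ne_zero {K : Type*} [Field K]
    (A : Matrix (Fin (n + 1)) (Fin (n + 1)) K) {j : Fin (n + 1)}
    (h : LinearIndependent K fun i => A (j.succAbove i)) :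
    ∃ u, (A.updateRow j u).det ≠ 0 := by
  have hlt : span K (Set.range fun i => A (j.succAbove i)) < ⊤ := by
    refine lt_top_of_finrank_lt_finrank ?_
    rw [finrank_span_eq_card h]
    simp
  obtain ⟨u, -, hu⟩ := SetLike.exists_of_lt hlt
  refine ⟨u, ?_⟩
  rw [← isUnit_iff_ne_zero, ← isUnit_iff_isUnit_det, ← linearIndependent_rows_iff_isUnit,
    ← linearIndependent_equiv (finSuccEquiv' j).symm, linearIndependent_option]
  exact ⟨by simpa [Function.comp_def, row_apply', j.succAbove_ne] using h,
    by simpa [Function.comp_def, row_apply', j.succAbove_ne] using hu⟩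

theorem not_linearIndependent_of_det_submatrix_succAbove_eq_zero {K : Type*} [Field K]
    (A : Matrix (Fin (n + 1)) (Fin (n + 1)) K) {j : Fin (n + 1)}
    (h : ∀ c : Fin (n + 1), (A.submatrix j.succAbove c.succAbove).det = 0) :
    ¬ LinearIndependent K fun i => A (j.succAbove i) := fun hli =>
  let ⟨u, hu⟩ := A.exists_det_updateRow_ne_zero hli
  hu (det_updateRow_eq_zero_of_det_submatrix_eq_zero A h u)

end Matrix

/-- Let `Y` be a `((t+1) × (t+1))`-matrix over a field `K` such that every `t × t` minor
of `Y` whose set of rows contains the first row of `Y` vanishes. If the first row of `Y`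
is nonzero, then the remaining `t` rows of `Y` are linearly dependent over `K`. -/
theorem stmt17 {K : Type*} [Field K] {t : ℕ} (ht : 0 < t)
    (Y : Matrix (Fin (t + 1)) (Fin (t + 1)) K)
    (hminor : ∀ (r : Fin t → Fin (t + 1)) (c : Fin t → Fin (t + 1)),
      Function.Injective r → Function.Injective c → (∃ i, r i = 0) →
      (Y.submatrix r c).det = 0)
    (h0 : Y 0 ≠ 0) :
    ¬ LinearIndependent K (fun i : Fin t => Y i.succ) := by
  intro hli
  obtain ⟨n, rfl⟩ : ∃ n, t = n + 1 := ⟨t - 1, by omega⟩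
  refine h0 (hli.eq_zero_of_forall_mem_span_image_compl fun k => ?_)
  have hdep := Y.not_linearIndependent_of_det_submatrix_succAbove_eq_zero fun c =>
    hminor _ _ Fin.succAbove_right_injective Fin.succAbove_right_injective
      ⟨0, Fin.succ_succAbove_zero k⟩
  have hrows : (fun i => Y (k.succ.succAbove i)) =
      Fin.cons (Y 0) fun i => Y (k.succAbove i).succ := by
    ext i : 1
    cases i using Fin.cases <;> simp
  rw [hrows, linearIndependent_finCons, not_and_not_right] at hdep
  rw [← Fin.range_succAbove, ← Set.range_comp]
  exact hdep (hli.comp _ Fin.succAbove_right_injective)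
end
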